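/- arXiv:1611.07458 — 2 statements merged into one kernel-verified Lean document; each statement's English description precedes it below -/
import Mathlib

section
/- Let s be odd, k = GF(2^s), and θ, β ∈ k with θ^2 + θ = β/(β^2 + β + 1). Then 1/(θ^2 + θ + 1) = 1 + β/(β+1) + (β/(β+1))^2, provided β ≠ 1; moreover Tr(1/(θ^2 + θ + 1)) = 1. -/
/-! Frobenius is an automorphism of `GF(2^s)` over `GF(2)`, so `Tr (x^2 + x) = 0` for every `x`;
since `Tr 1 = s = 1`, neither `x^2 + x = 1` nor `x^2 + x + 1 = 0` has a solution. This rules out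
`β = 1` and makes all denominators nonzero. In characteristic 2,
`θ^2 + θ + 1 = (β + 1)^2 / (β^2 + β + 1)`, whose inverse is `1 + y + y^2` with `y = β / (β + 1)`,
and `Tr (1 + y + y^2) = Tr 1 + Tr (y^2 + y) = 1`. -/

open Algebra Module

theorem Algebra.trace_pow_card {K L : Type*} [Field K] [Fintype K] [Field L] [Algebra K L]
    [Finite L] (x : L) : trace K L (x ^ Fintype.card K) = trace K L x :=
  trace_eq_of_algEquiv (FiniteField.frobeniusAlgEquivOfAlgebraic K L) x

section CharTwo

variable {L : Type*} [Field L] [Algebra (ZMod 2) L] [Finite L]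

theorem trace_sq_add_self_eq_zero (x : L) : trace (ZMod 2) L (x ^ 2 + x) = 0 := by
  have hsq := Algebra.trace_pow_card (K := ZMod 2) x
  rw [ZMod.card] at hsq
  rw [map_add, hsq, CharTwo.add_self_eq_zero]

theorem trace_one_of_odd_finrank (h : Odd (finrank (ZMod 2) L)) : trace (ZMod 2) L 1 = 1 := by
  rw [← map_one (algebraMap (ZMod 2) L), trace_algebraMap, nsmul_one,
    ZMod.natCast_eq_one_iff_odd.mpr h]

theorem sq_add_self_ne_one (htr : trace (ZMod 2) L 1 = 1) (x : L) : x ^ 2 + x ≠ 1 := fun hx => by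
  simpa [hx, htr] using trace_sq_add_self_eq_zero x

theorem trace_one_add_add_sq (htr : trace (ZMod 2) L 1 = 1) (y : L) :
    trace (ZMod 2) L (1 + y + y ^ 2) = 1 := by
  rw [add_assoc, add_comm y, map_add, trace_sq_add_self_eq_zero, htr, add_zero]

variable [CharP L 2]

theorem sq_add_self_add_one_ne_zero (htr : trace (ZMod 2) L 1 = 1) (x : L) :
    x ^ 2 + x + 1 ≠ 0 := fun hx =>
  sq_add_self_ne_one htr x <| by rwa [add_eq_zero_iff_eq_neg, CharTwo.neg_eq] at hx

end CharTwo

theorem one_div_sq_add_self_add_one {L : Type*} [Field L] [CharP L 2] {θ β : L}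
    (hD : β ^ 2 + β + 1 ≠ 0) (hβ : β + 1 ≠ 0) (h : θ ^ 2 + θ = β / (β ^ 2 + β + 1)) :
    1 / (θ ^ 2 + θ + 1) = 1 + β / (β + 1) + (β / (β + 1)) ^ 2 := by
  have two : (2 : L) = 0 := CharTwo.two_eq_zero
  have hθ : θ ^ 2 + θ + 1 = (β + 1) ^ 2 / (β ^ 2 + β + 1) := by
    rw [h, div_add_one hD]
    ring
  rw [hθ, one_div_div]
  field_simp
  linear_combination -(β ^ 2 + β) * two

theorem stmt_3_general (s : ℕ) (hodd : Odd s) (θ β : GaloisField 2 s)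
    (h : θ ^ 2 + θ = β / (β ^ 2 + β + 1)) :
    (β ≠ 1 → 1 / (θ ^ 2 + θ + 1) = 1 + β / (β + 1) + (β / (β + 1)) ^ 2) ∧
      Algebra.trace (ZMod 2) (GaloisField 2 s) (1 / (θ ^ 2 + θ + 1)) = 1 := by
  have htr : trace (ZMod 2) (GaloisField 2 s) 1 = 1 :=
    trace_one_of_odd_finrank (by rwa [GaloisField.finrank 2 hodd.pos.ne'])
  have hβ : β + 1 ≠ 0 := by
    intro hβ
    obtain rfl : β = 1 := by linear_combination hβ - CharTwo.two_eq_zero (R := GaloisField 2 s)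
    have h3 : (1 : GaloisField 2 s) ^ 2 + 1 + 1 = 1 := by
      linear_combination CharTwo.two_eq_zero (R := GaloisField 2 s)
    exact sq_add_self_ne_one htr θ (by rw [h, h3, div_one])
  have key := one_div_sq_add_self_add_one (sq_add_self_add_one_ne_zero htr β) hβ h
  exact ⟨fun _ => key, key ▸ trace_one_add_add_sq htr _⟩

/-- For `s` odd and `θ, β ∈ GF(2^s)` with `θ^2 + θ = β/(β^2+β+1)`:
if `β ≠ 1` then `1/(θ^2+θ+1) = 1 + β/(β+1) + (β/(β+1))^2`; moreover
`Tr(1/(θ^2+θ+1)) = 1`. -/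
theorem stmt_3 (s : ℕ) (hs : 0 < s) (hodd : Odd s) (θ β : GaloisField 2 s)
    (h : θ ^ 2 + θ = β / (β ^ 2 + β + 1)) :
    (β ≠ 1 → 1 / (θ ^ 2 + θ + 1) = 1 + β / (β + 1) + (β / (β + 1)) ^ 2) ∧
      Algebra.trace (ZMod 2) (GaloisField 2 s) (1 / (θ ^ 2 + θ + 1)) = 1 :=
  stmt_3_general s hodd θ β h
end

section
/- Let s be odd and k = GF(2^s). If θ ∈ k is a root of T^2 + T + β/(β^2+β+1) for some β ∈ k, then exactly one of the two polynomials T^2 + T + θ/(θ^2+θ+1) and T^2 + T + (θ+1)/(θ^2+θ+1) has a root in k. -/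
/-!
In characteristic 2 the map `℘ r = r ^ 2 + r` is additive with kernel `{0, 1}`, so on a finite
field its image `H` (the elements `c` for which `T ^ 2 + T + c` has a root) has index 2.
Hence `a + b ∉ H` forces exactly one of `a`, `b` into `H`. For `q = θ ^ 2 + θ + 1` the two
constants add up to `q⁻¹`, and the hypothesis on `θ` gives `q⁻¹ = 1 + ℘ (β + 1)⁻¹`. Finally
`1 ∉ H` when `s` is odd, because a root of `T ^ 2 + T + 1` is a primitive cube root of unity
and `3 ∤ 2 ^ s - 1`.
-/

section ArtinSchreier

variable (F : Type*) [Field F] [CharP F 2]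

def artinSchreier : F →+ F where
  toFun r := r ^ 2 + r
  map_zero' := by simp
  map_add' r t := by rw [add_pow_char]; ring

variable {F}

@[simp]
theorem artinSchreier_apply (r : F) : artinSchreier F r = r ^ 2 + r := rfl

theorem mem_range_artinSchreier_iff {c : F} :
    c ∈ (artinSchreier F).range ↔ ∃ r : F, r ^ 2 + r + c = 0 := by
  simp only [AddMonoidHom.mem_range, artinSchreier_apply, add_eq_zero_iff_eq_neg,
    CharTwo.neg_eq]

theorem ker_artinSchreier : ((artinSchreier F).ker : Set F) = {0, 1} := by
  ext r
  have hfactor : r ^ 2 + r = r * (r + 1) := by ring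
  simp only [SetLike.mem_coe, AddMonoidHom.mem_ker, artinSchreier_apply, hfactor,
    mul_eq_zero, add_eq_zero_iff_eq_neg, CharTwo.neg_eq, Set.mem_insert_iff,
    Set.mem_singleton_iff]

theorem index_range_artinSchreier [Finite F] : (artinSchreier F).range.index = 2 := by
  have hker : Nat.card (artinSchreier F).ker = 2 := by
    rw [← SetLike.coe_sort_coe, ker_artinSchreier, Nat.card_coe_set_eq,
      Set.ncard_pair zero_ne_one]
  have hcard := (artinSchreier F).ker.card_mul_index
  rw [hker, AddSubgroup.index_ker, ← (artinSchreier F).range.card_mul_index, mul_comm] at hcard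
  exact Nat.eq_of_mul_eq_mul_left Nat.card_pos hcard.symm

theorem xor_mem_range_artinSchreier [Finite F] {a b : F}
    (hab : a + b ∉ (artinSchreier F).range) :
    Xor (a ∈ (artinSchreier F).range) (b ∈ (artinSchreier F).range) := by
  rwa [AddSubgroup.add_mem_iff_of_index_two index_range_artinSchreier, ← xor_iff_not_iff] at hab

theorem sq_add_self_add_one_ne_zero_s5 [Finite F] (hF : Nat.card F % 3 = 2) (x : F) :
    x ^ 2 + x + 1 ≠ 0 := by
  intro hx
  have := Fintype.ofFinite F
  rw [Nat.card_eq_fintype_card] at hF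
  have hx1 : x ≠ 1 := by
    rintro rfl
    exact one_ne_zero (by linear_combination hx - CharTwo.add_self_eq_zero (1 : F))
  have hx0 : x ≠ 0 := by rintro rfl; simp at hx
  have horder : orderOf x = 3 :=
    orderOf_eq_prime (by linear_combination (x - 1) * hx) hx1
  have hdvd : 3 ∣ Fintype.card F - 1 :=
    horder ▸ orderOf_dvd_of_pow_eq_one (FiniteField.pow_card_sub_one_eq_one x hx0)
  have hpos : 0 < Fintype.card F := Fintype.card_pos
  omega

theorem one_notMem_range_artinSchreier [Finite F] (hF : Nat.card F % 3 = 2) :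
    (1 : F) ∉ (artinSchreier F).range := by
  rintro ⟨x, hx⟩
  refine sq_add_self_add_one_ne_zero_s5 hF x ?_
  rw [← hx, artinSchreier_apply, CharTwo.add_self_eq_zero]

theorem inv_sq_add_self_add_one_eq {θ β : F} (hθ : θ ^ 2 + θ + 1 ≠ 0)
    (hβ : β ^ 2 + β + 1 ≠ 0) (h : θ ^ 2 + θ + β / (β ^ 2 + β + 1) = 0) :
    (θ ^ 2 + θ + 1)⁻¹ = 1 + artinSchreier F (β + 1)⁻¹ := by
  have h2 : (2 : F) = 0 := CharTwo.two_eq_zero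
  have hβ1 : β + 1 ≠ 0 := by
    rintro hβ1
    obtain rfl : β = 1 := by linear_combination hβ1 - h2
    rw [show (1 : F) ^ 2 + 1 + 1 = 1 by linear_combination h2, div_one] at h
    exact hθ h
  have hq : θ ^ 2 + θ + 1 = (β + 1) ^ 2 / (β ^ 2 + β + 1) := by
    rw [eq_div_iff hβ]
    linear_combination (β ^ 2 + β + 1) * h - div_mul_cancel₀ β hβ - β * h2
  rw [hq, inv_div, artinSchreier_apply]
  field_simp
  linear_combination -(β + 1) * h2

end ArtinSchreier

theorem card_galoisField_two_mod_three {s : ℕ} (hs : Odd s) :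
    Nat.card (GaloisField 2 s) % 3 = 2 := by
  obtain ⟨m, rfl⟩ := hs
  rw [GaloisField.card 2 _ (by omega), pow_succ, pow_mul, Nat.mul_mod, Nat.pow_mod]
  norm_num

theorem stmt_5_general (s : ℕ) (hodd : Odd s) (θ β : GaloisField 2 s)
    (h : θ ^ 2 + θ + β / (β ^ 2 + β + 1) = 0) :
    Xor' (∃ r : GaloisField 2 s, r ^ 2 + r + θ / (θ ^ 2 + θ + 1) = 0)
      (∃ r : GaloisField 2 s, r ^ 2 + r + (θ + 1) / (θ ^ 2 + θ + 1) = 0) := by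
  have hcard := card_galoisField_two_mod_three hodd
  have hsum : θ / (θ ^ 2 + θ + 1) + (θ + 1) / (θ ^ 2 + θ + 1) = (θ ^ 2 + θ + 1)⁻¹ := by
    rw [← add_div, ← add_assoc, CharTwo.add_self_eq_zero, zero_add, one_div]
  simp only [← mem_range_artinSchreier_iff]
  apply xor_mem_range_artinSchreier
  rw [hsum, inv_sq_add_self_add_one_eq (sq_add_self_add_one_ne_zero_s5 hcard θ)
      (sq_add_self_add_one_ne_zero_s5 hcard β) h,
    AddSubgroup.add_mem_cancel_right _ (AddMonoidHom.mem_range.mpr ⟨_, rfl⟩)]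
  exact one_notMem_range_artinSchreier hcard

/-- For `s` odd and `θ ∈ GF(2^s)` a root of `T^2 + T + β/(β^2+β+1)` for some `β`,
exactly one of `T^2 + T + θ/(θ^2+θ+1)` and `T^2 + T + (θ+1)/(θ^2+θ+1)` has a root
in `GF(2^s)`. -/
theorem stmt_5 (s : ℕ) (hs : 0 < s) (hodd : Odd s) (θ β : GaloisField 2 s)
    (h : θ ^ 2 + θ + β / (β ^ 2 + β + 1) = 0) :
    Xor' (∃ r : GaloisField 2 s, r ^ 2 + r + θ / (θ ^ 2 + θ + 1) = 0)
      (∃ r : GaloisField 2 s, r ^ 2 + r + (θ + 1) / (θ ^ 2 + θ + 1) = 0) :=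
  stmt_5_general s hodd θ β h
end
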